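/- Let p > 2 and let B be a standard Brownian motion on [−1,1]. Then the process (T_h^B)_{h∈[0,1]} has a modification S^{B,p} that is continuous in the p-variation norm: there exists a process S^{B,p} : [0,1] × Ω → C([0,1]) such that for every h ∈ [0,1], P(S_h^{B,p} = T_h^B) = 1, almost surely every S_h^{B,p} has finite p-variation, and almost surely the map h ↦ S_h^{B,p} is continuous from [0,1] into the space of functions of finite p-variation equipped with ‖g‖_p := ‖g‖_∞ + V_p(g). -/

import Mathlib

/-!
Almost every Brownian path is `α`-Hölder on `[-1, 1]` for each `α < 1/2`: by the Gaussian tail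
bound, the probability that some increment of `B` over a dyadic interval of length `2⁻ⁿ` exceeds
`2^(-nα)` is summable in `n`, so by Borel–Cantelli only finitely many levels are bad, and dyadic
chaining turns the good levels into a Hölder bound. The frame process `T^B` itself is therefore
the required modification. Fix `1/p < α < 1/2`. An `α`-Hölder path with constant `C` has
`p`-variation at most `C` on `[0, 1]`, since `∑ |Δt|^(αp) ≤ ∑ Δt = 1`. The difference
`T_h^B - T_{h₀}^B` is bounded by `C |h - h₀|^α` and is `α`-Hölder with constant `2C`;
interpolating the two bounds makes it `1/p`-Hölder with a constant that tends to `0` as `h → h₀`.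
-/

open MeasureTheory ProbabilityTheory Filter
open scoped ENNReal NNReal

/-- The `p`-variation functional of a path `g` (restricted to `[0,1]` via dissections
`0 = t 0 < t 1 < ... < t n = 1`), with values in `[0,∞]`. -/
noncomputable def pVar {V : Type*} [NormedAddCommGroup V] (p : ℝ) (g : ℝ → V) : ℝ≥0∞ :=
  ⨆ (n : ℕ) (t : Fin (n+1) → ℝ) (_ : StrictMono t) (_ : t 0 = 0) (_ : t (Fin.last n) = 1),
    (∑ i : Fin n, (ENNReal.ofReal ‖g (t i.succ) - g (t i.castSucc)‖) ^ p) ^ p⁻¹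

/-- The sup-norm of `g` over `[0,1]`, valued in `[0,∞]`. -/
noncomputable def supE (g : ℝ → ℝ) : ℝ≥0∞ := ⨆ u : Set.Icc (0:ℝ) 1, ENNReal.ofReal |g u|

/-- The `p`-variation norm `‖g‖_p = ‖g‖_∞ + V_p(g)`, valued in `[0,∞]`. -/
noncomputable def pNormE (p : ℝ) (g : ℝ → ℝ) : ℝ≥0∞ := supE g + pVar p g

/-- `B` is a standard Brownian motion on `[-1,1]` (with `B₋₁ = 0`) under the probability
measure `P`: it has a.s. continuous sample paths, Gaussian increments of variance `t - s`,
and independent increments over disjoint intervals. -/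
structure IsStdBM {Ω : Type*} [MeasurableSpace Ω] (P : Measure Ω) (B : ℝ → Ω → ℝ) : Prop where
  meas : ∀ t : ℝ, Measurable (B t)
  start : ∀ᵐ ω ∂P, B (-1) ω = 0
  cont : ∀ᵐ ω ∂P, ContinuousOn (fun t => B t ω) (Set.Icc (-1) 1)
  gauss : ∀ s t : ℝ, -1 ≤ s → s ≤ t → t ≤ 1 →
    P.map (fun ω => B t ω - B s ω) = gaussianReal 0 (Real.toNNReal (t - s))
  indep : ∀ (n : ℕ) (t : Fin (n+1) → ℝ), Monotone t → -1 ≤ t 0 → t (Fin.last n) ≤ 1 →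
    iIndepFun
      (fun i : Fin n => fun ω => B (t i.succ) ω - B (t i.castSucc) ω) P

open Topology Real

theorem Fin.sum_succ_sub_castSucc {M : Type*} [AddCommGroup M] {n : ℕ} (t : Fin (n + 1) → M) :
    ∑ i : Fin n, (t i.succ - t i.castSucc) = t (Fin.last n) - t 0 := by
  induction n with
  | zero => simp
  | succ n ih =>
    rw [Fin.sum_univ_castSucc]
    simp only [Fin.succ_castSucc]
    rw [ih (fun i => t i.castSucc)]
    simp

theorem HolderOnWith.of_dist_le {X Y : Type*} [PseudoMetricSpace X] [PseudoMetricSpace Y]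
    {f : X → Y} {s : Set X} {C r : ℝ≥0}
    (h : ∀ x ∈ s, ∀ y ∈ s, dist (f x) (f y) ≤ C * dist x y ^ (r : ℝ)) : HolderOnWith C r f s := by
  intro x hx y hy
  rw [edist_dist, edist_dist, ENNReal.ofReal_rpow_of_nonneg dist_nonneg r.coe_nonneg,
    ← ENNReal.ofReal_coe_nnreal, ← ENNReal.ofReal_mul C.coe_nonneg]
  exact ENNReal.ofReal_le_ofReal (h x hx y hy)

theorem HolderOnWith.of_dist_le_of_dist_le {X Y : Type*} [PseudoMetricSpace X]
    [PseudoMetricSpace Y] {f : X → Y} {s : Set X} {r : ℝ≥0} {K M δ : ℝ} (hK : 0 ≤ K)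
    (hδ : 0 < δ) (hM : ∀ x ∈ s, ∀ y ∈ s, dist (f x) (f y) ≤ M)
    (hlocal : ∀ x ∈ s, ∀ y ∈ s, dist x y ≤ δ → dist (f x) (f y) ≤ K * dist x y ^ (r : ℝ)) :
    HolderOnWith (K + M / δ ^ (r : ℝ)).toNNReal r f s := by
  refine HolderOnWith.of_dist_le fun x hx y hy => ?_
  have hM0 : 0 ≤ M := dist_self (f x) ▸ hM x hx x hx
  have hδr : 0 < δ ^ (r : ℝ) := by positivity
  rw [Real.coe_toNNReal _ (by positivity), add_mul]
  by_cases hxy : dist x y ≤ δ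
  · have : 0 ≤ M / δ ^ (r : ℝ) * dist x y ^ (r : ℝ) := by positivity
    linarith [hlocal x hx y hy hxy]
  · have : δ ^ (r : ℝ) ≤ dist x y ^ (r : ℝ) :=
      Real.rpow_le_rpow hδ.le (not_le.1 hxy).le r.coe_nonneg
    calc dist (f x) (f y) ≤ M / δ ^ (r : ℝ) * δ ^ (r : ℝ) := by
          rw [div_mul_cancel₀ _ hδr.ne']; exact hM x hx y hy
      _ ≤ K * dist x y ^ (r : ℝ) + M / δ ^ (r : ℝ) * dist x y ^ (r : ℝ) := by
          have : 0 ≤ K * dist x y ^ (r : ℝ) := by positivity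
          nlinarith [div_nonneg hM0 hδr.le]

theorem HolderOnWith.sub {X E : Type*} [PseudoEMetricSpace X] [SeminormedAddCommGroup E]
    {f g : X → E} {C D r : ℝ≥0} {s : Set X} (hf : HolderOnWith C r f s)
    (hg : HolderOnWith D r g s) : HolderOnWith (C + D) r (f - g) s := by
  intro x hx y hy
  calc edist ((f - g) x) ((f - g) y) ≤ edist (f x) (f y) + edist (g x) (g y) := by
        simp only [Pi.sub_apply, edist_dist]
        rw [← ENNReal.ofReal_add dist_nonneg dist_nonneg]
        exact ENNReal.ofReal_le_ofReal (dist_sub_sub_le _ _ _ _)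
    _ ≤ C * edist x y ^ (r : ℝ) + D * edist x y ^ (r : ℝ) :=
        add_le_add (hf x hx y hy) (hg x hx y hy)
    _ = (C + D : ℝ≥0) * edist x y ^ (r : ℝ) := by push_cast; ring

theorem holderOnWith_zero_of_enorm_le {X E : Type*} [PseudoEMetricSpace X]
    [SeminormedAddCommGroup E] {f : X → E} {s : Set X} {M : ℝ≥0} (hM : ∀ x ∈ s, ‖f x‖ₑ ≤ M) :
    HolderOnWith (2 * M) 0 f s := by
  intro x hx y hy
  calc edist (f x) (f y) ≤ ‖f x‖ₑ + ‖f y‖ₑ := by rw [edist_eq_enorm_sub]; exact enorm_sub_le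
    _ ≤ M + M := add_le_add (hM x hx) (hM y hy)
    _ = (2 * M : ℝ≥0) * edist x y ^ ((0 : ℝ≥0) : ℝ) := by
        rw [NNReal.coe_zero, ENNReal.rpow_zero, mul_one]; push_cast; ring

theorem pVar_le_of_holderOnWith {V : Type*} [NormedAddCommGroup V] {g : ℝ → V} {K r : ℝ≥0}
    {p : ℝ} (hp : 0 < p) (hrp : 1 ≤ r * p) (hg : HolderOnWith K r g (Set.Icc 0 1)) :
    pVar p g ≤ K := by
  refine iSup_le fun n => iSup_le fun t => iSup_le fun ht => iSup_le fun ht0 =>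
    iSup_le fun ht1 => ?_
  have hmem : ∀ i, t i ∈ Set.Icc (0 : ℝ) 1 := fun i =>
    ⟨ht0 ▸ ht.monotone (Fin.zero_le i), ht1 ▸ ht.monotone (Fin.le_last i)⟩
  have hterm : ∀ i : Fin n, ENNReal.ofReal ‖g (t i.succ) - g (t i.castSucc)‖ ^ p ≤
      (K : ℝ≥0∞) ^ p * ENNReal.ofReal (t i.succ - t i.castSucc) := by
    intro i
    have hle : edist (t i.succ) (t i.castSucc) ≤ 1 := by
      rw [edist_dist]
      exact ENNReal.ofReal_le_one.2 (Real.dist_le_of_mem_Icc_01 (hmem _) (hmem _))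
    calc ENNReal.ofReal ‖g (t i.succ) - g (t i.castSucc)‖ ^ p
        = edist (g (t i.succ)) (g (t i.castSucc)) ^ p := by rw [edist_dist, dist_eq_norm]
      _ ≤ (K * edist (t i.succ) (t i.castSucc) ^ (r : ℝ)) ^ p := by
        gcongr; exact hg _ (hmem _) _ (hmem _)
      _ = K ^ p * edist (t i.succ) (t i.castSucc) ^ ((r : ℝ) * p) := by
        rw [ENNReal.mul_rpow_of_nonneg _ _ hp.le, ENNReal.rpow_mul]
      _ ≤ K ^ p * edist (t i.succ) (t i.castSucc) := by
        gcongr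
        simpa using ENNReal.rpow_le_rpow_of_exponent_ge hle hrp
      _ = K ^ p * ENNReal.ofReal (t i.succ - t i.castSucc) := by
        rw [edist_dist, Real.dist_eq, abs_of_pos (sub_pos.2 (ht (Fin.castSucc_lt_succ (i := i))))]
  calc (∑ i : Fin n, ENNReal.ofReal ‖g (t i.succ) - g (t i.castSucc)‖ ^ p) ^ p⁻¹
      ≤ (∑ i : Fin n, (K : ℝ≥0∞) ^ p * ENNReal.ofReal (t i.succ - t i.castSucc)) ^ p⁻¹ := by
        gcongr with i; exact hterm i
    _ = ((K : ℝ≥0∞) ^ p * ENNReal.ofReal (∑ i : Fin n, (t i.succ - t i.castSucc))) ^ p⁻¹ := by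
        rw [← Finset.mul_sum, ENNReal.ofReal_sum_of_nonneg fun i _ =>
          (sub_pos.2 (ht (Fin.castSucc_lt_succ (i := i)))).le]
    _ = K := by
        rw [Fin.sum_succ_sub_castSucc, ht0, ht1, sub_zero, ENNReal.ofReal_one, mul_one,
          ← ENNReal.rpow_mul, mul_inv_cancel₀ hp.ne', ENNReal.rpow_one]

theorem pNormE_le_of_holderOnWith {g : ℝ → ℝ} {M C α θ : ℝ≥0} {p : ℝ} (hp : 0 < p)
    (hθ : θ ≤ 1) (hθαp : 1 ≤ θ * α * p) (hM : ∀ u ∈ Set.Icc 0 1, ‖g u‖ₑ ≤ M)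
    (hg : HolderOnWith C α g (Set.Icc 0 1)) :
    pNormE p g ≤ ((M + C ^ (θ : ℝ) * (2 * M) ^ ((1 - θ : ℝ≥0) : ℝ) : ℝ≥0) : ℝ≥0∞) := by
  have hsup : supE g ≤ M := iSup_le fun u => by
    rw [← Real.enorm_eq_ofReal_abs]; exact hM u u.2
  have hinterp := hg.interpolate (holderOnWith_zero_of_enorm_le hM) (add_tsub_cancel_of_le hθ)
  have hpVar := pVar_le_of_holderOnWith hp (by push_cast; linarith) hinterp
  exact (add_le_add hsup hpVar).trans_eq (by push_cast; ring)

def frame {E : Type*} (f : ℝ → E) (h : ℝ) : ℝ → E := fun u => f (h - 1 + u)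

theorem frame_mem_Icc {h u : ℝ} (hh : h ∈ Set.Icc (0 : ℝ) 1) (hu : u ∈ Set.Icc (0 : ℝ) 1) :
    h - 1 + u ∈ Set.Icc (-1 : ℝ) 1 :=
  ⟨by linarith [hh.1, hu.1], by linarith [hh.2, hu.2]⟩

section Frame

variable {E : Type*} [SeminormedAddCommGroup E] {f : ℝ → E} {C r : ℝ≥0}

theorem holderOnWith_frame (hf : HolderOnWith C r f (Set.Icc (-1) 1)) {h : ℝ}
    (hh : h ∈ Set.Icc (0 : ℝ) 1) : HolderOnWith C r (frame f h) (Set.Icc 0 1) :=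
  fun x hx y hy => by
    simpa only [frame, edist_add_left] using
      hf _ (frame_mem_Icc hh hx) _ (frame_mem_Icc hh hy)

theorem HolderOnWith.enorm_frame_sub_frame_le (hf : HolderOnWith C r f (Set.Icc (-1) 1))
    {h h₀ u : ℝ} (hh : h ∈ Set.Icc (0 : ℝ) 1) (hh₀ : h₀ ∈ Set.Icc (0 : ℝ) 1)
    (hu : u ∈ Set.Icc (0 : ℝ) 1) :
    ‖frame f h u - frame f h₀ u‖ₑ ≤ ((C * nndist h h₀ ^ (r : ℝ) : ℝ≥0) : ℝ≥0∞) := by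
  rw [← edist_eq_enorm_sub]
  calc edist (frame f h u) (frame f h₀ u) ≤ C * edist (h - 1 + u) (h₀ - 1 + u) ^ (r : ℝ) :=
        hf _ (frame_mem_Icc hh hu) _ (frame_mem_Icc hh₀ hu)
    _ = ((C * nndist h h₀ ^ (r : ℝ) : ℝ≥0) : ℝ≥0∞) := by
        rw [edist_add_right, edist_sub_right, edist_nndist, ENNReal.coe_mul,
          ENNReal.coe_rpow_of_nonneg _ r.coe_nonneg]

end Frame

theorem HolderOnWith.exists_pNormE_frame_sub_lt {f : ℝ → ℝ} {C α : ℝ≥0} {p : ℝ}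
    (hf : HolderOnWith C α f (Set.Icc (-1) 1)) (hα : 0 < α) (hαp : 1 < α * p)
    {h₀ : ℝ} (hh₀ : h₀ ∈ Set.Icc (0 : ℝ) 1) {ε : ℝ} (hε : 0 < ε) :
    ∃ δ : ℝ, 0 < δ ∧ ∀ h ∈ Set.Icc (0 : ℝ) 1, |h - h₀| < δ →
      pNormE p (fun u => frame f h u - frame f h₀ u) < ENNReal.ofReal ε := by
  have hp : 0 < p := pos_of_mul_pos_right (one_pos.trans hαp) α.coe_nonneg
  set θ : ℝ≥0 := ((α : ℝ) * p)⁻¹.toNNReal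
  have hθα : (θ : ℝ) * α * p = 1 := by
    rw [Real.coe_toNNReal _ (by positivity), mul_assoc, inv_mul_cancel₀ (by positivity)]
  have hθ : θ < 1 := by
    rw [← NNReal.coe_lt_coe, Real.coe_toNNReal _ (by positivity)]
    exact inv_lt_one_of_one_lt₀ hαp
  set F : ℝ≥0 → ℝ≥0 := fun d =>
    C * d ^ (α : ℝ) + (C + C) ^ (θ : ℝ) * (2 * (C * d ^ (α : ℝ))) ^ ((1 - θ : ℝ≥0) : ℝ)
  have hF : Filter.Tendsto F (𝓝 0) (𝓝 0) := by
    have hcont : Continuous F := by fun_prop (disch := positivity)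
    have hF0 : F 0 = 0 := by
      have : ((1 - θ : ℝ≥0) : ℝ) ≠ 0 := NNReal.coe_ne_zero.2 (tsub_pos_of_lt hθ).ne'
      simp [F, NNReal.zero_rpow (NNReal.coe_ne_zero.2 hα.ne'), NNReal.zero_rpow this]
    simpa [hF0] using hcont.tendsto 0
  obtain ⟨δ, hδ, hFδ⟩ := Metric.tendsto_nhds_nhds.1 hF ε hε
  refine ⟨δ, hδ, fun h hh hhδ => ?_⟩
  have hdist : dist (nndist h h₀) 0 < δ := by
    rwa [NNReal.dist_eq, NNReal.coe_zero, sub_zero, coe_nndist, abs_of_nonneg dist_nonneg,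
      Real.dist_eq]
  have hFlt : (F (nndist h h₀) : ℝ) < ε := by
    simpa [NNReal.dist_eq] using hFδ hdist
  calc pNormE p (fun u => frame f h u - frame f h₀ u) ≤ F (nndist h h₀) :=
        pNormE_le_of_holderOnWith hp hθ.le (by rw [hθα])
          (fun u hu => hf.enorm_frame_sub_frame_le hh hh₀ hu)
          ((holderOnWith_frame hf hh).sub (holderOnWith_frame hf hh₀))
    _ < ENNReal.ofReal ε := by
        rw [← ENNReal.ofReal_coe_nnreal]; exact (ENNReal.ofReal_lt_ofReal_iff hε).2 hFlt

noncomputable def dyadicFloor (n : ℕ) (x : ℝ) : ℝ := ⌊x * 2 ^ n⌋ / 2 ^ n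

theorem dyadicFloor_le (n : ℕ) (x : ℝ) : dyadicFloor n x ≤ x := by
  rw [dyadicFloor, div_le_iff₀ (by positivity)]
  exact Int.floor_le _

theorem sub_lt_dyadicFloor (n : ℕ) (x : ℝ) : x - (2 ^ n)⁻¹ < dyadicFloor n x := by
  rw [dyadicFloor, lt_div_iff₀ (by positivity), sub_mul, inv_mul_cancel₀ (by positivity)]
  exact Int.sub_one_lt_floor _

theorem tendsto_dyadicFloor (x : ℝ) : Tendsto (dyadicFloor · x) atTop (𝓝 x) := by
  have hlow : Tendsto (fun n : ℕ => x - ((2 : ℝ) ^ n)⁻¹) atTop (𝓝 x) := by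
    simpa using (tendsto_const_nhds (x := x)).sub
      (tendsto_inv_atTop_zero.comp (tendsto_pow_atTop_atTop_of_one_lt one_lt_two))
  exact tendsto_of_tendsto_of_tendsto_of_le_of_le hlow tendsto_const_nhds
    (fun n => (sub_lt_dyadicFloor n x).le) (fun n => dyadicFloor_le n x)

theorem intCast_le_dyadicFloor {k : ℤ} {x : ℝ} (hk : k ≤ x) (n : ℕ) :
    (k : ℝ) ≤ dyadicFloor n x := by
  have : k * 2 ^ n ≤ ⌊x * 2 ^ n⌋ := Int.le_floor.2 (by push_cast; gcongr)
  rw [dyadicFloor, le_div_iff₀ (by positivity)]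
  exact_mod_cast this

theorem dyadicFloor_mem_Icc {x : ℝ} (hx : x ∈ Set.Icc (-1 : ℝ) 1) (n : ℕ) :
    dyadicFloor n x ∈ Set.Icc (-1 : ℝ) 1 :=
  ⟨by exact_mod_cast intCast_le_dyadicFloor (k := -1) (by exact_mod_cast hx.1) n,
    (dyadicFloor_le n x).trans hx.2⟩

def DyadicIncrementsLE (f : ℝ → ℝ) (ρ : ℝ) (N : ℕ) : Prop :=
  ∀ n ≥ N, ∀ k : ℤ, -1 ≤ ((k : ℝ) - 1) / 2 ^ n → (k : ℝ) / 2 ^ n ≤ 1 →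
    |f (k / 2 ^ n) - f ((k - 1) / 2 ^ n)| ≤ ρ ^ n

namespace DyadicIncrementsLE

variable {f : ℝ → ℝ} {ρ : ℝ} {N n : ℕ}

theorem abs_sub_le_of_le_add_one (hf : DyadicIncrementsLE f ρ N) (hρ : 0 ≤ ρ) (hn : N ≤ n)
    {a b : ℤ} (hab : a ≤ b) (hba : b ≤ a + 1) (ha : -1 ≤ (a : ℝ) / 2 ^ n)
    (hb : (b : ℝ) / 2 ^ n ≤ 1) : |f (b / 2 ^ n) - f (a / 2 ^ n)| ≤ ρ ^ n := by
  obtain rfl | rfl : b = a ∨ b = a + 1 := by omega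
  · simp [pow_nonneg hρ]
  · simpa using hf n hn (a + 1) (by simpa using ha) (by exact_mod_cast hb)

theorem abs_dyadicFloor_succ_sub_le (hf : DyadicIncrementsLE f ρ N) (hρ : 0 ≤ ρ) (hn : N ≤ n)
    {x : ℝ} (hx : x ∈ Set.Icc (-1 : ℝ) 1) :
    |f (dyadicFloor (n + 1) x) - f (dyadicFloor n x)| ≤ ρ ^ (n + 1) := by
  have hx2 : x * 2 ^ (n + 1) = x * 2 ^ n * 2 := by ring
  have hcoarse : dyadicFloor n x = (2 * ⌊x * 2 ^ n⌋ : ℤ) / 2 ^ (n + 1) := by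
    rw [dyadicFloor]; push_cast; rw [pow_succ]; field_simp
  have hlow : 2 * ⌊x * 2 ^ n⌋ ≤ ⌊x * 2 ^ (n + 1)⌋ :=
    Int.le_floor.2 (by rw [hx2]; push_cast; linarith [Int.floor_le (x * 2 ^ n)])
  have hhigh : ⌊x * 2 ^ (n + 1)⌋ ≤ 2 * ⌊x * 2 ^ n⌋ + 1 := by
    have : ⌊x * 2 ^ (n + 1)⌋ < 2 * ⌊x * 2 ^ n⌋ + 2 :=
      Int.floor_lt.2 (by rw [hx2]; push_cast; linarith [Int.lt_floor_add_one (x * 2 ^ n)])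
    omega
  have hcoarse_mem := dyadicFloor_mem_Icc hx n
  rw [hcoarse] at hcoarse_mem ⊢
  exact hf.abs_sub_le_of_le_add_one hρ (hn.trans n.le_succ) hlow hhigh hcoarse_mem.1
    (dyadicFloor_mem_Icc hx (n + 1)).2

theorem abs_sub_dyadicFloor_le (hf : DyadicIncrementsLE f ρ N)
    (hcont : ContinuousOn f (Set.Icc (-1) 1)) (hρ0 : 0 ≤ ρ) (hρ1 : ρ < 1) (hn : N ≤ n) {x : ℝ}
    (hx : x ∈ Set.Icc (-1 : ℝ) 1) :
    |f (dyadicFloor n x) - f x| ≤ ρ ^ (n + 1) / (1 - ρ) := by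
  have hlim : Tendsto (fun m => f (dyadicFloor (m + n) x)) atTop (𝓝 (f x)) :=
    (hcont x hx).tendsto.comp <| tendsto_nhdsWithin_iff.2
      ⟨(tendsto_dyadicFloor x).comp (tendsto_add_atTop_nat n),
        Eventually.of_forall fun m => dyadicFloor_mem_Icc hx _⟩
  have hstep : ∀ m : ℕ, dist (f (dyadicFloor (m + n) x)) (f (dyadicFloor (m + 1 + n) x)) ≤
      ρ ^ (n + 1) * ρ ^ m := by
    intro m
    rw [Real.dist_eq, abs_sub_comm, ← pow_add, add_right_comm, add_comm (n + 1)]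
    exact hf.abs_dyadicFloor_succ_sub_le hρ0 (by omega) hx
  simpa [Real.dist_eq] using dist_le_of_le_geometric_of_tendsto ρ _ hρ1 hstep hlim 0

theorem abs_sub_le_of_sub_le_inv_two_pow (hf : DyadicIncrementsLE f ρ N)
    (hcont : ContinuousOn f (Set.Icc (-1) 1)) (hρ0 : 0 ≤ ρ) (hρ1 : ρ < 1) (hn : N ≤ n) {s t : ℝ}
    (hs : s ∈ Set.Icc (-1 : ℝ) 1) (ht : t ∈ Set.Icc (-1 : ℝ) 1) (hst : s ≤ t)
    (hts : t - s ≤ (2 ^ n)⁻¹) :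
    |f t - f s| ≤ 2 / (1 - ρ) * ρ ^ n := by
  have h2n : (0 : ℝ) < 2 ^ n := by positivity
  have hfloor : ⌊s * 2 ^ n⌋ ≤ ⌊t * 2 ^ n⌋ := Int.floor_le_floor (by gcongr)
  have hceil : ⌊t * 2 ^ n⌋ ≤ ⌊s * 2 ^ n⌋ + 1 := by
    rw [← Int.floor_add_one]
    refine Int.floor_le_floor ?_
    have := mul_le_mul_of_nonneg_right hts h2n.le
    rw [inv_mul_cancel₀ h2n.ne'] at this
    linarith
  have hmid : |f (dyadicFloor n t) - f (dyadicFloor n s)| ≤ ρ ^ n :=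
    hf.abs_sub_le_of_le_add_one hρ0 hn hfloor hceil (dyadicFloor_mem_Icc hs n).1
      (dyadicFloor_mem_Icc ht n).2
  have ht' := hf.abs_sub_dyadicFloor_le hcont hρ0 hρ1 hn ht
  have hs' := hf.abs_sub_dyadicFloor_le hcont hρ0 hρ1 hn hs
  have hρn : ρ ^ (n + 1) / (1 - ρ) + ρ ^ n + ρ ^ (n + 1) / (1 - ρ) ≤ 2 / (1 - ρ) * ρ ^ n := by
    have h1ρ : 0 < 1 - ρ := by linarith
    field_simp
    rw [pow_succ]
    nlinarith [pow_nonneg hρ0 n]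
  calc |f t - f s|
      ≤ |f (dyadicFloor n t) - f t| + |f (dyadicFloor n t) - f (dyadicFloor n s)| +
          |f (dyadicFloor n s) - f s| := by
        linarith [abs_sub_le (f t) (f (dyadicFloor n t)) (f s),
          abs_sub_le (f (dyadicFloor n t)) (f (dyadicFloor n s)) (f s),
          abs_sub_comm (f t) (f (dyadicFloor n t))]
    _ ≤ 2 / (1 - ρ) * ρ ^ n := by linarith

theorem abs_sub_le_rpow {α : ℝ≥0} (hf : DyadicIncrementsLE f ρ N)
    (hcont : ContinuousOn f (Set.Icc (-1) 1)) (hα : 0 < α) (hρ : ρ = (2 : ℝ)⁻¹ ^ (α : ℝ))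
    {s t : ℝ} (hs : s ∈ Set.Icc (-1 : ℝ) 1) (ht : t ∈ Set.Icc (-1 : ℝ) 1) (hst : s < t)
    (hts : t - s ≤ (2 ^ N)⁻¹) :
    |f t - f s| ≤ 2 / (1 - ρ) * ρ⁻¹ * (t - s) ^ (α : ℝ) := by
  have hρ0 : 0 < ρ := hρ ▸ by positivity
  have hρ1 : ρ < 1 := hρ ▸ Real.rpow_lt_one (by norm_num) (by norm_num) hα
  have hpos : 0 < t - s := sub_pos.2 hst
  have hN : (2 : ℝ) ^ N ≤ (t - s)⁻¹ := (le_inv_comm₀ hpos (by positivity)).1 hts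
  obtain ⟨n, hn, hn'⟩ := exists_nat_pow_near ((one_le_pow₀ one_le_two).trans hN) one_lt_two
  have hNn : N ≤ n :=
    Nat.lt_succ_iff.1 ((pow_lt_pow_iff_right₀ one_lt_two).1 (hN.trans_lt hn'))
  have hρn : ρ ^ (n + 1) ≤ (t - s) ^ (α : ℝ) := by
    rw [hρ, Real.rpow_pow_comm (by norm_num), inv_pow]
    exact Real.rpow_le_rpow (by positivity) ((inv_le_comm₀ hpos (by positivity)).1 hn'.le)
      α.coe_nonneg
  have h1ρ : 0 < 1 - ρ := by linarith
  calc |f t - f s| ≤ 2 / (1 - ρ) * ρ ^ n :=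
        hf.abs_sub_le_of_sub_le_inv_two_pow hcont hρ0.le hρ1 hNn hs ht hst.le
          ((le_inv_comm₀ (by positivity) hpos).1 hn)
    _ = 2 / (1 - ρ) * ρ⁻¹ * ρ ^ (n + 1) := by field_simp; ring
    _ ≤ 2 / (1 - ρ) * ρ⁻¹ * (t - s) ^ (α : ℝ) := by gcongr

theorem exists_holderOnWith {α : ℝ≥0} (hf : DyadicIncrementsLE f ((2 : ℝ)⁻¹ ^ (α : ℝ)) N)
    (hcont : ContinuousOn f (Set.Icc (-1) 1)) (hα : 0 < α) :
    ∃ C : ℝ≥0, HolderOnWith C α f (Set.Icc (-1) 1) := by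
  set ρ : ℝ := (2 : ℝ)⁻¹ ^ (α : ℝ)
  have hρ1 : ρ < 1 := Real.rpow_lt_one (by norm_num) (by norm_num) hα
  obtain ⟨M, hM⟩ := isCompact_Icc.exists_bound_of_continuousOn hcont
  have hK : 0 ≤ 2 / (1 - ρ) * ρ⁻¹ := by
    have : 0 < 1 - ρ := by linarith
    positivity
  refine ⟨_, HolderOnWith.of_dist_le_of_dist_le hK (by positivity : (0 : ℝ) < (2 ^ N)⁻¹)
    (M := 2 * M) (fun x hx y hy => ?_) (fun s hs t ht hst => ?_)⟩
  · linarith [dist_le_norm_add_norm (f x) (f y), hM x hx, hM y hy]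
  · simp only [Real.dist_eq] at hst ⊢
    rcases lt_trichotomy s t with hlt | rfl | hgt
    · rw [abs_sub_comm s, abs_of_pos (sub_pos.2 hlt)] at hst ⊢
      rw [abs_sub_comm]
      exact hf.abs_sub_le_rpow hcont hα rfl hs ht hlt hst
    · simp only [sub_self, abs_zero]
      positivity
    · rw [abs_of_pos (sub_pos.2 hgt)] at hst ⊢
      exact hf.abs_sub_le_rpow hcont hα rfl ht hs hgt hst

end DyadicIncrementsLE

theorem summable_pow_mul_exp_neg_mul_pow {a b c : ℝ} (ha : 1 < a) (hb : 0 < b) (hc : 0 ≤ c) :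
    Summable fun n : ℕ => c ^ n * exp (-(b * a ^ n)) := by
  obtain ⟨k, hk⟩ := pow_unbounded_of_one_lt (2 * c) ha
  have ha0 : 0 < a := one_pos.trans ha
  refine Summable.of_nonneg_of_le (fun n => by positivity) (fun n => ?_)
    (summable_geometric_two.mul_left (k.factorial / b ^ k))
  calc c ^ n * exp (-(b * a ^ n)) ≤ (a ^ k / 2) ^ n * ((b * a ^ n) ^ k / k.factorial)⁻¹ := by
        rw [exp_neg]
        gcongr
        · linarith
        · exact pow_div_factorial_le_exp _ (by positivity) k
    _ = k.factorial / b ^ k * (1 / 2) ^ n := by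
        rw [div_pow, mul_pow, ← pow_mul, ← pow_mul, mul_comm k n]
        field_simp
        rw [← mul_pow]
        norm_num

theorem ProbabilityTheory.hasSubgaussianMGF_of_map_eq_gaussianReal {Ω : Type*}
    [MeasurableSpace Ω] {P : Measure Ω} {X : Ω → ℝ} {v : ℝ≥0}
    (hX : P.map X = gaussianReal 0 v) : HasSubgaussianMGF X v P where
  integrable_exp_mul t := by
    have hXm : AEMeasurable X P := aemeasurable_of_map_neZero (by rw [hX]; infer_instance)
    exact (integrable_map_measure (by fun_prop) hXm).1 (hX ▸ integrable_exp_mul_gaussianReal t)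
  mgf_le t := by rw [mgf_gaussianReal hX]; simp

theorem ProbabilityTheory.HasSubgaussianMGF.measure_abs_ge_le {Ω : Type*} [MeasurableSpace Ω]
    {P : Measure Ω} [IsFiniteMeasure P] {X : Ω → ℝ} {c : ℝ≥0} (hX : HasSubgaussianMGF X c P)
    {ε : ℝ} (hε : 0 ≤ ε) :
    P {ω | ε ≤ |X ω|} ≤ ENNReal.ofReal (2 * exp (-ε ^ 2 / (2 * c))) := by
  have hsplit : {ω | ε ≤ |X ω|} = {ω | ε ≤ X ω} ∪ {ω | ε ≤ (-X) ω} := by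
    ext ω; simp only [Set.mem_ofPred_eq, Set.mem_union, Pi.neg_apply, le_abs]
  calc P {ω | ε ≤ |X ω|} ≤ P {ω | ε ≤ X ω} + P {ω | ε ≤ (-X) ω} :=
        hsplit ▸ measure_union_le _ _
    _ = ENNReal.ofReal (P.real {ω | ε ≤ X ω}) + ENNReal.ofReal (P.real {ω | ε ≤ (-X) ω}) := by
        rw [ofReal_measureReal, ofReal_measureReal]
    _ ≤ ENNReal.ofReal (exp (-ε ^ 2 / (2 * c))) + ENNReal.ofReal (exp (-ε ^ 2 / (2 * c))) := by
        gcongr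
        exacts [hX.measure_ge_le hε, hX.neg.measure_ge_le hε]
    _ = ENNReal.ofReal (2 * exp (-ε ^ 2 / (2 * c))) := by
        rw [← ENNReal.ofReal_add (by positivity) (by positivity), ← two_mul]

namespace IsStdBM

variable {Ω : Type*} [MeasurableSpace Ω] {P : Measure Ω} {B : ℝ → Ω → ℝ}

theorem measure_abs_sub_ge_le [IsFiniteMeasure P] (hB : IsStdBM P B) {s t : ℝ} (hs : -1 ≤ s)
    (hst : s ≤ t) (ht : t ≤ 1) {ε : ℝ} (hε : 0 ≤ ε) :
    P {ω | ε ≤ |B t ω - B s ω|} ≤ ENNReal.ofReal (2 * exp (-ε ^ 2 / (2 * (t - s)))) := by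
  simpa [Real.coe_toNNReal _ (sub_nonneg.2 hst)] using
    (hasSubgaussianMGF_of_map_eq_gaussianReal (hB.gauss s t hs hst ht)).measure_abs_ge_le hε

theorem measure_dyadic_increment_gt_le [IsFiniteMeasure P] (hB : IsStdBM P B) {ρ : ℝ}
    (hρ0 : 0 ≤ ρ) {n : ℕ} {k : ℤ} (hk : k ∈ Finset.Icc (-2 ^ n + 1 : ℤ) (2 ^ n)) :
    P {ω | ρ ^ n < |B (k / 2 ^ n) ω - B ((k - 1) / 2 ^ n) ω|} ≤
      ENNReal.ofReal (2 * exp (-(2⁻¹ * (2 * ρ ^ 2) ^ n))) := by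
  rw [Finset.mem_Icc] at hk
  have h2n : (0 : ℝ) < 2 ^ n := by positivity
  have hk1 : (-2 ^ n + 1 : ℝ) ≤ k := by exact_mod_cast hk.1
  have hk2 : (k : ℝ) ≤ 2 ^ n := by exact_mod_cast hk.2
  have hinc := hB.measure_abs_sub_ge_le (s := ((k : ℝ) - 1) / 2 ^ n) (t := k / 2 ^ n)
    (by rw [le_div_iff₀ h2n]; linarith) (by gcongr; linarith) (by rw [div_le_one h2n]; exact hk2)
    (pow_nonneg hρ0 n)
  refine (measure_mono (Set.ofPred_subset_ofPred.2 fun ω => le_of_lt)).trans (hinc.trans_eq ?_)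
  -- the sub-Gaussian exponent `(ρ ^ n) ^ 2 / (2 * 2⁻ⁿ)` of an increment of variance `2⁻ⁿ`
  congr 3
  field_simp
  ring

theorem measure_biUnion_dyadic_increment_gt_le [IsFiniteMeasure P] (hB : IsStdBM P B) {ρ : ℝ}
    (hρ0 : 0 ≤ ρ) (n : ℕ) :
    P (⋃ k ∈ Finset.Icc (-2 ^ n + 1 : ℤ) (2 ^ n),
        {ω | ρ ^ n < |B (k / 2 ^ n) ω - B ((k - 1) / 2 ^ n) ω|}) ≤
      ENNReal.ofReal (4 * 2 ^ n * exp (-(2⁻¹ * (2 * ρ ^ 2) ^ n))) := by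
  calc _ ≤ ∑ k ∈ Finset.Icc (-2 ^ n + 1 : ℤ) (2 ^ n),
        P {ω | ρ ^ n < |B (k / 2 ^ n) ω - B ((k - 1) / 2 ^ n) ω|} := measure_biUnion_finset_le _ _
    _ ≤ (Finset.Icc (-2 ^ n + 1 : ℤ) (2 ^ n)).card •
        ENNReal.ofReal (2 * exp (-(2⁻¹ * (2 * ρ ^ 2) ^ n))) :=
        Finset.sum_le_card_nsmul _ _ _ fun k hk => hB.measure_dyadic_increment_gt_le hρ0 hk
    _ = ENNReal.ofReal (4 * 2 ^ n * exp (-(2⁻¹ * (2 * ρ ^ 2) ^ n))) := by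
        rw [Int.card_Icc, nsmul_eq_mul, ← ENNReal.ofReal_natCast,
          ← ENNReal.ofReal_mul (by positivity)]
        congr 1
        rw [show (2 ^ n + 1 - (-2 ^ n + 1) : ℤ) = ((2 * 2 ^ n : ℕ) : ℤ) by push_cast; ring,
          Int.toNat_natCast]
        push_cast
        ring

theorem ae_exists_dyadicIncrementsLE [IsFiniteMeasure P] (hB : IsStdBM P B) {ρ : ℝ}
    (hρ0 : 0 ≤ ρ) (hρ : 1 < 2 * ρ ^ 2) :
    ∀ᵐ ω ∂P, ∃ N, DyadicIncrementsLE (B · ω) ρ N := by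
  have hsum : ∑' n : ℕ, P (⋃ k ∈ Finset.Icc (-2 ^ n + 1 : ℤ) (2 ^ n),
      {ω | ρ ^ n < |B (k / 2 ^ n) ω - B ((k - 1) / 2 ^ n) ω|}) ≠ ⊤ := by
    have hsumm : Summable fun n : ℕ => 4 * 2 ^ n * exp (-(2⁻¹ * (2 * ρ ^ 2) ^ n)) := by
      simpa only [mul_assoc] using
        (summable_pow_mul_exp_neg_mul_pow hρ (by norm_num) zero_le_two).mul_left 4
    refine ne_top_of_le_ne_top ENNReal.ofReal_ne_top <|
      (ENNReal.tsum_le_tsum (hB.measure_biUnion_dyadic_increment_gt_le hρ0)).trans_eq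
        (ENNReal.ofReal_tsum_of_nonneg (fun n => by positivity) hsumm).symm
  filter_upwards [ae_eventually_notMem hsum] with ω hω
  obtain ⟨N, hN⟩ := eventually_atTop.1 hω
  refine ⟨N, fun n hn k hk1 hk2 => not_lt.1 fun hlt => hN n hn (Set.mem_biUnion ?_ hlt)⟩
  have h2n : (0 : ℝ) < 2 ^ n := by positivity
  rw [le_div_iff₀ h2n] at hk1
  rw [div_le_one h2n] at hk2
  exact Finset.mem_Icc.2
    ⟨by exact_mod_cast (by linarith : (-2 ^ n + 1 : ℝ) ≤ k), by exact_mod_cast hk2⟩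

theorem ae_exists_holderOnWith [IsFiniteMeasure P] (hB : IsStdBM P B) {α : ℝ≥0} (hα0 : 0 < α)
    (hα : (α : ℝ) < 1 / 2) :
    ∀ᵐ ω ∂P, ∃ C, HolderOnWith C α (B · ω) (Set.Icc (-1) 1) := by
  have hρ : 1 < 2 * ((2 : ℝ)⁻¹ ^ (α : ℝ)) ^ 2 := by
    rw [← Real.rpow_natCast, ← Real.rpow_mul (by norm_num)]
    have : (2 : ℝ)⁻¹ ^ (1 : ℝ) < 2⁻¹ ^ ((α : ℝ) * (2 : ℕ)) :=
      Real.rpow_lt_rpow_of_exponent_gt (by norm_num) (by norm_num) (by push_cast; linarith)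
    rw [Real.rpow_one] at this
    linarith
  filter_upwards [hB.ae_exists_dyadicIncrementsLE (by positivity) hρ, hB.cont]
    with ω ⟨N, hN⟩ hcont
  exact hN.exists_holderOnWith hcont hα0

end IsStdBM

/-- **Existence of the `p`-variation frame process.** For `p > 2`, the Brownian frame process
`(T_h^B)_{h ∈ [0,1]}`, `T_h^B(u) = B_{h-1+u}`, has a modification `S` such that for every
`h ∈ [0,1]`, a.s. `S_h = T_h^B` on `[0,1]`, and almost surely every `S_h` has finite
`p`-variation and `h ↦ S_h` is continuous in the `p`-variation norm `‖·‖_p = ‖·‖_∞ + V_p`. -/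
theorem frame_process_modification {Ω : Type*} [MeasurableSpace Ω] (P : Measure Ω)
    [IsProbabilityMeasure P] (B : ℝ → Ω → ℝ) (hB : IsStdBM P B) (p : ℝ) (hp : 2 < p) :
    ∃ S : ℝ → Ω → ℝ → ℝ,
      (∀ h ∈ Set.Icc (0:ℝ) 1, ∀ᵐ ω ∂P, ∀ u ∈ Set.Icc (0:ℝ) 1, S h ω u = B (h - 1 + u) ω) ∧
      (∀ᵐ ω ∂P,
        (∀ h ∈ Set.Icc (0:ℝ) 1, pVar p (S h ω) < ∞) ∧
        (∀ h₀ ∈ Set.Icc (0:ℝ) 1, ∀ ε : ℝ, 0 < ε → ∃ δ : ℝ, 0 < δ ∧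
          ∀ h ∈ Set.Icc (0:ℝ) 1, |h - h₀| < δ →
            pNormE p (fun u => S h ω u - S h₀ ω u) < ENNReal.ofReal ε)) := by
  obtain ⟨α, hα0, hα, hαp⟩ : ∃ α : ℝ≥0, 0 < α ∧ (α : ℝ) < 1 / 2 ∧ 1 < α * p := by
    have hp' : p⁻¹ < 2⁻¹ := inv_strictAnti₀ two_pos hp
    refine ⟨((p⁻¹ + 2⁻¹) / 2).toNNReal, by simp; positivity, ?_, ?_⟩ <;>
      rw [Real.coe_toNNReal _ (by positivity)]
    · linarith
    · field_simp
      linarith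
  refine ⟨fun h ω => frame (B · ω) h, fun h _ => ae_of_all _ fun ω u _ => rfl, ?_⟩
  filter_upwards [hB.ae_exists_holderOnWith hα0 hα] with ω ⟨C, hC⟩
  exact ⟨fun h hh => (pVar_le_of_holderOnWith (by positivity) hαp.le
      (holderOnWith_frame hC hh)).trans_lt ENNReal.coe_lt_top,
    fun h₀ hh₀ ε hε => hC.exists_pNormE_frame_sub_lt hα0 hαp hh₀ hε⟩
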